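/- If H is a connected split graph containing no induced odd sun, then its square H² is a balanced graph. -/

import Mathlib

open SimpleGraph

/-- The square of a graph: join distinct vertices at distance at most 2. -/
def Gsq {V : Type} (H : SimpleGraph V) : SimpleGraph V where
  Adj u v := u ≠ v ∧ (H.Adj u v ∨ ∃ w, H.Adj u w ∧ H.Adj w v)
  symm := by
    constructor
    rintro u v ⟨h1, h2⟩
    refine ⟨h1.symm, ?_⟩
    rcases h2 with h | ⟨w, hw1, hw2⟩
    · exact Or.inl h.symm
    · exact Or.inr ⟨w, hw2.symm, hw1.symm⟩
  loopless := ⟨fun v h => h.1 rfl⟩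

/-- `C`, `I` form a split partition of `H`: `C` a clique, `I` independent. -/
def IsSplitPart {V : Type} (H : SimpleGraph V) (C I : Set V) : Prop :=
  C ∪ I = Set.univ ∧ Disjoint C I ∧ H.IsClique C ∧ ∀ a ∈ I, ∀ b ∈ I, ¬ H.Adj a b

/-- `H` is a split graph. -/
def IsSplit {V : Type} (H : SimpleGraph V) : Prop := ∃ C I, IsSplitPart H C I

/-- The set of inclusion-maximal cliques of `G`. -/
def maxCliques {V : Type} (G : SimpleGraph V) : Set (Set V) :=
  {Q | G.IsClique Q ∧ ∀ R, G.IsClique R → Q ⊆ R → Q = R}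

/-- The intersection of all maximal cliques of `G`. -/
def core {V : Type} (G : SimpleGraph V) : Set V := ⋂₀ maxCliques G

/-- The condition `|⋂𝒞(G)| ≥ |𝒞(G)|`. -/
def cliqueIneq {V : Type} (G : SimpleGraph V) : Prop :=
  (maxCliques G).ncard ≤ (core G).ncard

/-- `G` contains an induced copy of `F`. -/
def InducedCopy {α V : Type} (F : SimpleGraph α) (G : SimpleGraph V) : Prop :=
  ∃ f : α ↪ V, ∀ a b, F.Adj a b ↔ G.Adj (f a) (f b)

/-- The `ℓ`-sun: independent set `inl i`, clique `inr i`, with `inl i` adjacent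
to exactly `inr i` and `inr (i+1)` (mod ℓ). -/
def sunGraph (ℓ : ℕ) : SimpleGraph (Fin ℓ ⊕ Fin ℓ) :=
  SimpleGraph.fromRel (fun a b =>
    match a, b with
    | .inr _, .inr _ => True
    | .inl i, .inr j => j.val = i.val ∨ j.val = (i.val + 1) % ℓ
    | _, _ => False)

/-- `H` contains no induced 3-sun. -/
def Sun3Free {V : Type} (H : SimpleGraph V) : Prop := ¬ InducedCopy (sunGraph 3) H

/-- `H` contains no induced odd sun. -/
def OddSunFree {V : Type} (H : SimpleGraph V) : Prop :=
  ∀ ℓ, 3 ≤ ℓ → Odd ℓ → ¬ InducedCopy (sunGraph ℓ) H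

/-- The cycle on `n` vertices. -/
def cycleG (n : ℕ) : SimpleGraph (Fin n) :=
  SimpleGraph.fromRel (fun i j => j.val = (i.val + 1) % n)

/-- `G` is chordal: no induced cycle of length at least 4. -/
def Chordal {V : Type} (G : SimpleGraph V) : Prop :=
  ∀ n, 4 ≤ n → ¬ InducedCopy (cycleG n) G

/-- `G` is strongly chordal: chordal and `ℓ`-sun-free for all `ℓ ≥ 3`. -/
def StronglyChordal {V : Type} (G : SimpleGraph V) : Prop :=
  Chordal G ∧ ∀ ℓ, 3 ≤ ℓ → ¬ InducedCopy (sunGraph ℓ) G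

/-- The trunk `T(G)`: a split graph whose clique is `𝒞(G)` and whose
independent set is `V(G) \ ⋂𝒞(G)`, with `v` adjacent to `Q` iff `v ∈ Q`. -/
def trunk {V : Type} (G : SimpleGraph V) :
    SimpleGraph (↥(maxCliques G) ⊕ ↥{v : V | v ∉ core G}) :=
  SimpleGraph.fromRel (fun a b =>
    match a, b with
    | .inl _, .inl _ => True
    | .inl Q, .inr v => (v : V) ∈ (Q : Set V)
    | _, _ => False)

/-- The join of two graphs. -/
def joinG {α β : Type} (G : SimpleGraph α) (H : SimpleGraph β) : SimpleGraph (α ⊕ β) :=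
  SimpleGraph.fromRel (fun a b =>
    match a, b with
    | .inl x, .inl y => G.Adj x y
    | .inr x, .inr y => H.Adj x y
    | .inl _, .inr _ => True
    | _, _ => False)

/-- The vertex-to-maximal-clique incidence bipartite graph of `G`. -/
def incidence {V : Type} (G : SimpleGraph V) : SimpleGraph (V ⊕ ↥(maxCliques G)) :=
  SimpleGraph.fromRel (fun a b =>
    match a, b with
    | .inl v, .inr Q => v ∈ (Q : Set V)
    | _, _ => False)

/-- `G` is balanced: its vertex-to-maximal-clique incidence graph has no induced
cycle of length `2k` for odd `k ≥ 3`. -/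
def BalancedGraph {V : Type} (G : SimpleGraph V) : Prop :=
  ∀ k, 3 ≤ k → Odd k → ¬ InducedCopy (cycleG (2 * k)) (incidence G)

/-- `G` is clique-Helly: every nonempty pairwise intersecting family of maximal
cliques has a common vertex. -/
def CliqueHelly {V : Type} (G : SimpleGraph V) : Prop :=
  ∀ S ⊆ maxCliques G, S.Nonempty →
    (∀ Q ∈ S, ∀ R ∈ S, (Q ∩ R).Nonempty) → (⋂₀ S).Nonempty

/-- `G` is hereditary clique-Helly. -/
def HCH {V : Type} (G : SimpleGraph V) : Prop :=
  ∀ S : Set V, CliqueHelly (G.induce S)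

/-- Adding an apex vertex adjacent exactly to the vertices of `C`. -/
def addApex {V : Type} (H : SimpleGraph V) (C : Set V) : SimpleGraph (Option V) :=
  SimpleGraph.fromRel (fun a b =>
    match a, b with
    | some x, some y => H.Adj x y
    | none, some y => y ∈ C
    | _, _ => False)

/-- A class of graphs is hereditary if it is closed under induced subgraphs
(up to isomorphism). -/
def Hereditary (𝒢 : ∀ α : Type, SimpleGraph α → Prop) : Prop :=
  ∀ (α β : Type) (F : SimpleGraph α) (G : SimpleGraph β),
    𝒢 β G → InducedCopy F G → 𝒢 α F

/-- A class `𝒢` is simple: every `H ∈ 𝒢` can be mapped to some `H' ∈ 𝒢` with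
`H'² ≅ H² ⊕ K₁`. -/
def SimpleClass (𝒢 : ∀ α : Type, SimpleGraph α → Prop) : Prop :=
  ∀ (α : Type) (H : SimpleGraph α), 𝒢 α H →
    ∃ (β : Type) (H' : SimpleGraph β), 𝒢 β H' ∧
      Nonempty (Gsq H' ≃g joinG (Gsq H) (⊤ : SimpleGraph (Fin 1)))

/-- The Hajós-type graphs `G₁,…,G₄` (`hajos 0 = G₁`, …, `hajos 3 = G₄`): the
3-sun with `k` additional edges among its degree-2 vertices. -/
def hajos (k : ℕ) : SimpleGraph (Fin 3 ⊕ Fin 3) :=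
  SimpleGraph.fromRel (fun a b =>
    match a, b with
    | .inr _, .inr _ => True
    | .inl i, .inr j => j.val = i.val ∨ j.val = (i.val + 1) % 3
    | .inl i, .inl j => (i.val = 0 ∧ j.val = 1 ∧ 1 ≤ k) ∨
        (i.val = 1 ∧ j.val = 2 ∧ 2 ≤ k) ∨ (i.val = 0 ∧ j.val = 2 ∧ 3 ≤ k)
    | _, _ => False)
/-! ### Auxiliary machinery for the proof -/

section Aux

lemma modsucc {x n : ℕ} (h : x < n) : (x + 1) % n = if x + 1 = n then 0 else x + 1 := by
  split
  · simp [*, Nat.mod_self]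
  · exact Nat.mod_eq_of_lt (by omega)

lemma inc_adj {W : Type} (G : SimpleGraph W) (v : W) (Q : ↥(maxCliques G)) :
    (incidence G).Adj (Sum.inl v) (Sum.inr Q) ↔ (v ∈ (Q : Set W)) := by
  simp [incidence, SimpleGraph.fromRel_adj]

lemma inc_not_adj_ll {W : Type} (G : SimpleGraph W) (v w : W) :
    ¬ (incidence G).Adj (Sum.inl v) (Sum.inl w) := by
  simp [incidence, SimpleGraph.fromRel_adj]

lemma inc_not_adj_rr {W : Type} (G : SimpleGraph W) (v w : ↥(maxCliques G)) :
    ¬ (incidence G).Adj (Sum.inr v) (Sum.inr w) := by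
  simp [incidence, SimpleGraph.fromRel_adj]

lemma cycle_adj (n : ℕ) (a b : Fin n) :
    (cycleG n).Adj a b ↔ a ≠ b ∧ (b.val = (a.val + 1) % n ∨ a.val = (b.val + 1) % n) := by
  simp [cycleG, SimpleGraph.fromRel_adj]

lemma fin_add_one_val {k : ℕ} [NeZero k] (hk : 2 ≤ k) (a : Fin k) :
    (a + 1).val = (a.val + 1) % k := by
  rw [Fin.add_def, Fin.val_one', Nat.mod_eq_of_lt (show 1 < k by omega)]

lemma fin_eq_add_one_iff {k : ℕ} [NeZero k] (hk : 2 ≤ k) (i j : Fin k) :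
    i = j + 1 ↔ i.val = (j.val + 1) % k := by
  rw [Fin.ext_iff, fin_add_one_val hk]

variable {V : Type} {H : SimpleGraph V} {C I : Set V}

lemma mem_C_or_I (hCI : IsSplitPart H C I) (v : V) : v ∈ C ∨ v ∈ I := by
  have := hCI.1
  have hv : v ∈ C ∪ I := by rw [this]; trivial
  exact hv

/-- From the exact sun adjacency pattern, derive a contradiction with odd-sun-freeness. -/
lemma sun_witness (hCI : IsSplitPart H C I) (hfree : OddSunFree H)
    (k : ℕ) [NeZero k] (hk : 3 ≤ k) (hodd : Odd k) (u c : Fin k → V)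
    (hu : ∀ i, u i ∈ I) (hc : ∀ i, c i ∈ C) (huinj : Function.Injective u)
    (hadj : ∀ i j, H.Adj (u i) (c j) ↔ (i = j ∨ i = j + 1)) : False := by
  have hdisj := hCI.2.1
  have hclique := hCI.2.2.1
  have hindep := hCI.2.2.2
  have hne_uc : ∀ i j, u i ≠ c j := by
    intro i j h
    exact Set.disjoint_left.mp hdisj (hc j) (h ▸ hu i)
  -- c is injective
  have hcinj : Function.Injective c := by
    intro j m hjm
    by_contra hne
    have h1 : H.Adj (u j) (c m) := by rw [← hjm]; exact (hadj j j).mpr (Or.inl rfl)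
    have h2 : H.Adj (u m) (c j) := by rw [hjm]; exact (hadj m m).mpr (Or.inl rfl)
    have e1 : j = m + 1 := ((hadj j m).mp h1).resolve_left hne
    have e2 : m = j + 1 := ((hadj m j).mp h2).resolve_left (Ne.symm hne)
    rw [fin_eq_add_one_iff (by omega)] at e1 e2
    rw [modsucc m.isLt] at e1
    rw [modsucc j.isLt] at e2
    have hj := j.isLt
    have hm := m.isLt
    split_ifs at e1 e2 <;> omega
  -- the embedding
  have hneg : Function.Injective (fun a : Fin k => -a) := fun a b h => by
    simpa using neg_inj.mp h
  refine hfree k hk hodd ⟨⟨Sum.elim (fun a => u (-a)) (fun b => c (-b)), ?_⟩, ?_⟩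
  · intro x y hxy
    match x, y with
    | Sum.inl a, Sum.inl b =>
      simp only [Sum.elim_inl] at hxy
      have := hneg (huinj hxy); simpa using this
    | Sum.inl a, Sum.inr b => exact absurd hxy (hne_uc _ _)
    | Sum.inr a, Sum.inl b => exact absurd hxy.symm (hne_uc _ _)
    | Sum.inr a, Sum.inr b =>
      simp only [Sum.elim_inr] at hxy
      have := hneg (hcinj hxy); simpa using this
  · intro x y
    match x, y with
    | Sum.inl a, Sum.inl b =>
      simp only [sunGraph, SimpleGraph.fromRel_adj, Sum.elim_inl, Function.Embedding.coeFn_mk]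
      constructor
      · rintro ⟨-, h | h⟩ <;> exact h.elim
      · intro h
        exact absurd h (hindep _ (hu _) _ (hu _))
    | Sum.inl a, Sum.inr b =>
      simp only [sunGraph, SimpleGraph.fromRel_adj, Sum.elim_inl, Sum.elim_inr, ne_eq,
        reduceCtorEq, not_false_eq_true, true_and, Function.Embedding.coeFn_mk]
      change (_ ↔ H.Adj (u (-a)) (c (-b)))
      rw [hadj]
      have h1 : (-a = -b) ↔ (b.val = a.val) := by
        rw [neg_inj, Fin.ext_iff, eq_comm]
      have h2 : (-a = -b + 1) ↔ (b.val = (a.val + 1) % k) := by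
        rw [← fin_eq_add_one_iff (by omega)]
        constructor
        · intro h; letI := Fin.instCommRing k; linear_combination h
        · intro h; letI := Fin.instCommRing k; linear_combination h
      rw [h1, h2]
      tauto
    | Sum.inr a, Sum.inl b =>
      simp only [sunGraph, SimpleGraph.fromRel_adj, Sum.elim_inl, Sum.elim_inr, ne_eq,
        reduceCtorEq, not_false_eq_true, true_and, Function.Embedding.coeFn_mk]
      change (_ ↔ H.Adj (c (-a)) (u (-b)))
      rw [SimpleGraph.adj_comm, hadj]
      have h1 : (-b = -a) ↔ (a.val = b.val) := by
        rw [neg_inj, Fin.ext_iff, eq_comm]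
      have h2 : (-b = -a + 1) ↔ (a.val = (b.val + 1) % k) := by
        rw [← fin_eq_add_one_iff (by omega)]
        constructor
        · intro h; letI := Fin.instCommRing k; linear_combination h
        · intro h; letI := Fin.instCommRing k; linear_combination h
      rw [h1, h2]
      tauto
    | Sum.inr a, Sum.inr b =>
      simp only [sunGraph, SimpleGraph.fromRel_adj, Sum.elim_inr, Function.Embedding.coeFn_mk]
      constructor
      · rintro ⟨hab, -⟩
        have : (-a : Fin k) ≠ -b := fun h => hab (by simpa using neg_inj.mp h)
        exact hclique (hc _) (hc _) (fun h => this (hcinj h))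
      · intro h
        refine ⟨fun hab => ?_, Or.inl trivial⟩
        obtain rfl : a = b := by simpa using hab
        exact H.irrefl h

lemma nbrC (hCI : IsSplitPart H C I) (hconn : H.Connected) (hV : ∃ x y : V, x ≠ y) :
    ∀ u ∈ I, ∃ c ∈ C, H.Adj u c := by
  intro u hu
  have hex : ∃ v : V, v ≠ u := by
    obtain ⟨x, y, hxy⟩ := hV
    rcases eq_or_ne x u with rfl | h
    · exact ⟨y, hxy.symm⟩
    · exact ⟨x, h⟩
  obtain ⟨v, hv⟩ := hex
  obtain ⟨w⟩ := hconn.preconnected u v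
  cases w with
  | nil => exact absurd rfl hv.symm
  | cons h p =>
    rename_i x
    rcases mem_C_or_I hCI x with hx | hx
    · exact ⟨x, hx, h⟩
    · exact absurd h (hCI.2.2.2 u hu x hx)

lemma universalC (hCI : IsSplitPart H C I) (hconn : H.Connected) (hV : ∃ x y : V, x ≠ y) :
    ∀ c ∈ C, ∀ v, v ≠ c → (Gsq H).Adj c v := by
  intro c hc v hv
  refine ⟨Ne.symm hv, ?_⟩
  rcases mem_C_or_I hCI v with hvC | hvI
  · exact Or.inl (hCI.2.2.1 hc hvC (Ne.symm hv))
  · obtain ⟨c', hc', hadj⟩ := nbrC hCI hconn hV v hvI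
    rcases eq_or_ne c' c with rfl | hne
    · exact Or.inl hadj.symm
    · exact Or.inr ⟨c', hCI.2.2.1 hc hc' (Ne.symm hne), hadj.symm⟩

lemma C_sub_max (hCI : IsSplitPart H C I) (hconn : H.Connected) (hV : ∃ x y : V, x ≠ y) :
    ∀ Q ∈ maxCliques (Gsq H), ∀ c ∈ C, c ∈ Q := by
  intro Q hQ c hc
  have hcl : (Gsq H).IsClique (insert c Q) := by
    apply hQ.1.insert
    intro b hb hbc
    exact universalC hCI hconn hV c hc b (Ne.symm hbc)
  have := hQ.2 (insert c Q) hcl (Set.subset_insert _ _)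
  rw [this]
  exact Set.mem_insert _ _

lemma common_nbr_of_sq_adj (hCI : IsSplitPart H C I) {u v : V} (hu : u ∈ I) (hv : v ∈ I)
    (h : (Gsq H).Adj u v) : ∃ c ∈ C, H.Adj u c ∧ H.Adj v c := by
  rcases h.2 with hadj | ⟨w, h1, h2⟩
  · exact absurd hadj (hCI.2.2.2 u hu v hv)
  · rcases mem_C_or_I hCI w with hw | hw
    · exact ⟨w, hw, h1, h2.symm⟩
    · exact absurd h1 (hCI.2.2.2 u hu w hw)

set_option maxHeartbeats 1000000 in
/-- Helly property for neighborhoods in `C` of vertices in `I`, from 3-sun-freeness. -/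
lemma hellyC (hCI : IsSplitPart H C I) (hfree : OddSunFree H)
    (hnbr : ∀ u ∈ I, ∃ c ∈ C, H.Adj u c) :
    ∀ S : Finset V, S.Nonempty → (∀ u ∈ S, u ∈ I) →
      (∀ u ∈ S, ∀ v ∈ S, u ≠ v → ∃ c ∈ C, H.Adj u c ∧ H.Adj v c) →
      ∃ c ∈ C, ∀ u ∈ S, H.Adj u c := by
  haveI := Classical.decEq V
  intro S
  induction S using Finset.strongInductionOn with
  | _ S ih =>
  intro hne hSI hpair
  by_cases h1 : S.card ≤ 1
  · obtain ⟨a, rfl⟩ := Finset.card_eq_one.mp (le_antisymm h1 (Finset.card_pos.mpr hne))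
    obtain ⟨c, hc, hadj⟩ := hnbr a (hSI a (Finset.mem_singleton_self a))
    exact ⟨c, hc, by simpa using hadj⟩
  by_cases h2 : S.card = 2
  · obtain ⟨a, b, hab, hS⟩ := Finset.card_eq_two.mp h2
    have ha : a ∈ S := by rw [hS]; simp
    have hb : b ∈ S := by rw [hS]; simp
    obtain ⟨c, hc, hca, hcb⟩ := hpair a ha b hb hab
    refine ⟨c, hc, ?_⟩
    intro x hx
    rw [hS, Finset.mem_insert, Finset.mem_singleton] at hx
    rcases hx with rfl | rfl
    · exact hca
    · exact hcb
  -- |S| ≥ 3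
  have h3 : 3 ≤ S.card := by omega
  obtain ⟨s1, hs1⟩ := hne
  have hne2 : (S.erase s1).Nonempty := by
    rw [← Finset.card_pos, Finset.card_erase_of_mem hs1]; omega
  obtain ⟨s2, hs2'⟩ := hne2
  have hs2 : s2 ∈ S := Finset.mem_of_mem_erase hs2'
  have h21 : s2 ≠ s1 := Finset.ne_of_mem_erase hs2'
  have hne3 : ((S.erase s1).erase s2).Nonempty := by
    rw [← Finset.card_pos, Finset.card_erase_of_mem hs2', Finset.card_erase_of_mem hs1]; omega
  obtain ⟨s3, hs3'⟩ := hne3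
  have hs3 : s3 ∈ S := Finset.mem_of_mem_erase (Finset.mem_of_mem_erase hs3')
  have h32 : s3 ≠ s2 := Finset.ne_of_mem_erase hs3'
  have h31 : s3 ≠ s1 := Finset.ne_of_mem_erase (Finset.mem_of_mem_erase hs3')
  -- common neighbours of the erased sets
  have key : ∀ s ∈ S, ∃ q ∈ C, ∀ x ∈ S.erase s, H.Adj x q := by
    intro s hs
    refine ih (S.erase s) (Finset.erase_ssubset hs) ?_ ?_ ?_
    · rw [← Finset.card_pos, Finset.card_erase_of_mem hs]; omega
    · exact fun u hu => hSI u (Finset.mem_of_mem_erase hu)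
    · exact fun u hu v hv h =>
        hpair u (Finset.mem_of_mem_erase hu) v (Finset.mem_of_mem_erase hv) h
  obtain ⟨q1, hq1C, hq1⟩ := key s1 hs1
  obtain ⟨q2, hq2C, hq2⟩ := key s2 hs2
  obtain ⟨q3, hq3C, hq3⟩ := key s3 hs3
  by_cases a1 : H.Adj s1 q1
  · refine ⟨q1, hq1C, fun u hu => ?_⟩
    rcases eq_or_ne u s1 with rfl | h
    · exact a1
    · exact hq1 u (Finset.mem_erase.mpr ⟨h, hu⟩)
  by_cases a2 : H.Adj s2 q2
  · refine ⟨q2, hq2C, fun u hu => ?_⟩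
    rcases eq_or_ne u s2 with rfl | h
    · exact a2
    · exact hq2 u (Finset.mem_erase.mpr ⟨h, hu⟩)
  by_cases a3 : H.Adj s3 q3
  · refine ⟨q3, hq3C, fun u hu => ?_⟩
    rcases eq_or_ne u s3 with rfl | h
    · exact a3
    · exact hq3 u (Finset.mem_erase.mpr ⟨h, hu⟩)
  -- build a 3-sun
  exfalso
  have A12 : H.Adj s1 q2 := hq2 s1 (Finset.mem_erase.mpr ⟨Ne.symm h21, hs1⟩)
  have A13 : H.Adj s1 q3 := hq3 s1 (Finset.mem_erase.mpr ⟨Ne.symm h31, hs1⟩)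
  have A21 : H.Adj s2 q1 := hq1 s2 (Finset.mem_erase.mpr ⟨h21, hs2⟩)
  have A23 : H.Adj s2 q3 := hq3 s2 (Finset.mem_erase.mpr ⟨Ne.symm h32, hs2⟩)
  have A31 : H.Adj s3 q1 := hq1 s3 (Finset.mem_erase.mpr ⟨h31, hs3⟩)
  have A32 : H.Adj s3 q2 := hq2 s3 (Finset.mem_erase.mpr ⟨h32, hs3⟩)
  -- u i := s_{i+1}, c j := q_{(j+2 mod 3)+1}
  have huinj : Function.Injective ![s1, s2, s3] := by
    intro a b hab
    fin_cases a <;> fin_cases b <;>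
      simp only [Matrix.cons_val_zero, Matrix.cons_val_one, Matrix.head_cons,
        Matrix.cons_val_two, Matrix.tail_cons] at hab <;>
      first
        | rfl
        | exact absurd hab h21.symm | exact absurd hab h21
        | exact absurd hab h31.symm | exact absurd hab h31
        | exact absurd hab h32.symm | exact absurd hab h32
  refine sun_witness hCI hfree 3 le_rfl (by decide) ![s1, s2, s3] ![q3, q1, q2]
    (fun i => by fin_cases i <;> [exact hSI s1 hs1; exact hSI s2 hs2; exact hSI s3 hs3])
    (fun i => by fin_cases i <;> [exact hq3C; exact hq1C; exact hq2C]) huinj ?_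
  intro i j
  fin_cases i <;> fin_cases j <;>
    simp [A12, A13, A21, A23, A31, A32, a1, a2, a3, Fin.ext_iff]

end Aux

section Main

variable {V : Type} {H : SimpleGraph V} {C I : Set V}

lemma succ_mod_shift {n x y : ℕ} (hn2 : 2 ≤ n) (hy : y < n) (hx : x < n) :
    ((y + 1) % n = (((x + 1) % n) + 1) % n) ↔ (y = (x + 1) % n) := by
  rcases eq_or_ne (x + 1) n with hxe | hxne
  · rw [hxe, Nat.mod_self, Nat.mod_eq_of_lt (show 0 + 1 < n by omega), modsucc hy]
    split_ifs <;>
      first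
        | omega
        | (simp only [false_iff, iff_false, true_iff, iff_true]; omega)
  · have hxl : x + 1 < n := by omega
    rw [Nat.mod_eq_of_lt hxl, modsucc hxl, modsucc hy]
    split_ifs <;>
      first
        | omega
        | (simp only [false_iff, iff_false, true_iff, iff_true]; omega)

lemma cycle_shift {n : ℕ} [NeZero n] (hn : 2 ≤ n) (a b : Fin n) :
    (cycleG n).Adj (a + 1) (b + 1) ↔ (cycleG n).Adj a b := by
  rw [cycle_adj, cycle_adj, fin_add_one_val hn, fin_add_one_val hn]
  have hne : (a + 1 = b + 1) ↔ a = b :=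
    ⟨fun h => add_right_cancel h, fun h => by rw [h]⟩
  exact and_congr (not_congr hne)
    (or_congr (succ_mod_shift hn b.isLt a.isLt) (succ_mod_shift hn a.isLt b.isLt))

lemma mem_maxCliques_iff {W : Type} {G : SimpleGraph W} {Q : Set W} :
    Q ∈ maxCliques G ↔ (G.IsClique Q ∧ ∀ R, G.IsClique R → Q ⊆ R → Q = R) := Iff.rfl

set_option maxHeartbeats 1000000 in
lemma main_core [Fintype V] (hCI : IsSplitPart H C I) (hfree : OddSunFree H)
    (hconn : H.Connected) (k : ℕ) (hk : 3 ≤ k) (hodd : Odd k)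
    (f : Fin (2 * k) ↪ (V ⊕ ↥(maxCliques (Gsq H))))
    (hf : ∀ a b, (cycleG (2 * k)).Adj a b ↔ (incidence (Gsq H)).Adj (f a) (f b))
    (hL : ∀ (m : ℕ) (h : m < 2 * k), ((f ⟨m, h⟩).isLeft = true ↔ m % 2 = 0)) : False := by
  haveI : NeZero k := ⟨by omega⟩
  haveI : NeZero (2 * k) := ⟨by omega⟩
  have hk2 : 2 ≤ k := by omega
  have hlt0 : ∀ i : Fin k, 2 * i.val < 2 * k := fun i => by have := i.isLt; omega
  have hlt1 : ∀ i : Fin k, 2 * i.val + 1 < 2 * k := fun i => by have := i.isLt; omega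
  have hex0 : ∀ i : Fin k, ∃ v : V, f ⟨2 * i.val, hlt0 i⟩ = Sum.inl v := by
    intro i
    have h := (hL (2 * i.val) (hlt0 i)).mpr (by omega)
    cases hfi : f ⟨2 * i.val, hlt0 i⟩ with
    | inl v => exact ⟨v, rfl⟩
    | inr Q => rw [hfi] at h; simp at h
  choose u hu using hex0
  have hex1 : ∀ i : Fin k, ∃ Q, f ⟨2 * i.val + 1, hlt1 i⟩ = Sum.inr Q := by
    intro i
    have h := hL (2 * i.val + 1) (hlt1 i)
    cases hfi : f ⟨2 * i.val + 1, hlt1 i⟩ with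
    | inl v => rw [hfi] at h; simp at h
    | inr Q => exact ⟨Q, rfl⟩
  choose Q hQ using hex1
  -- membership pattern
  have memIff : ∀ i j : Fin k, u i ∈ (Q j : Set V) ↔ (i = j ∨ i = j + 1) := by
    intro i j
    have hi := i.isLt
    have hj := j.isLt
    rw [← inc_adj (Gsq H) (u i) (Q j), ← hu i, ← hQ j, ← hf, cycle_adj,
      fin_eq_add_one_iff hk2]
    simp only [ne_eq, Fin.ext_iff, Fin.val_mk]
    rw [modsucc (hlt0 i), modsucc (hlt1 j), modsucc j.isLt]
    split_ifs <;> omega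
  -- u is injective
  have huinj : Function.Injective u := by
    intro i j hij
    have : f ⟨2 * i.val, hlt0 i⟩ = f ⟨2 * j.val, hlt0 j⟩ := by
      rw [hu i, hu j, hij]
    have h2 := f.injective this
    have h3 : 2 * i.val = 2 * j.val := congrArg Fin.val h2
    exact Fin.ext (by omega)
  have h01 : (0 : Fin k) ≠ 1 := by
    intro h
    have h2 := congrArg Fin.val h
    rw [Fin.val_zero, Fin.val_one'] at h2
    rw [Nat.mod_eq_of_lt (show 1 < k by omega)] at h2
    omega
  have hV : ∃ x y : V, x ≠ y := ⟨u 0, u 1, fun e => h01 (huinj e)⟩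
  -- the u's lie in I
  have huI : ∀ i, u i ∈ I := by
    intro i
    rcases mem_C_or_I hCI (u i) with h | h
    · exfalso
      have hmem := C_sub_max hCI hconn hV (Q (i + 1)) (Q (i + 1)).2 (u i) h
      rcases (memIff i (i + 1)).mp hmem with h' | h'
      · have := congrArg Fin.val h'
        rw [fin_add_one_val hk2, modsucc i.isLt] at this
        have hi := i.isLt
        split_ifs at this <;> omega
      · have h2 := (fin_eq_add_one_iff hk2 i (i + 1)).mp h'
        rw [fin_add_one_val hk2, modsucc i.isLt] at h2
        have hi := i.isLt
        split_ifs at h2 with hsp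
        · rw [modsucc (show 0 < k by omega)] at h2
          split_ifs at h2 <;> omega
        · rw [modsucc (show i.val + 1 < k by omega)] at h2
          split_ifs at h2 <;> omega
    · exact h
  -- common neighbours of the cliques
  have hSjex : ∀ j : Fin k, ∃ c ∈ C, ∀ x, x ∈ (Q j : Set V) → x ∈ I → H.Adj x c := by
    intro j
    haveI := Classical.decEq V
    have hfin : ((Q j : Set V) ∩ I).Finite := Set.toFinite _
    have hmem : ∀ x, x ∈ hfin.toFinset ↔ x ∈ (Q j : Set V) ∧ x ∈ I := by
      intro x; rw [Set.Finite.mem_toFinset, Set.mem_inter_iff]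
    obtain ⟨c, hcC, hcA⟩ := hellyC hCI hfree (nbrC hCI hconn hV) hfin.toFinset
      ⟨u j, (hmem _).mpr ⟨(memIff j j).mpr (Or.inl rfl), huI j⟩⟩
      (fun x hx => ((hmem x).mp hx).2)
      (by
        intro x hx y hy hxy
        have hadj : (Gsq H).Adj x y :=
          (Q j).2.1 ((hmem x).mp hx).1 ((hmem y).mp hy).1 hxy
        exact common_nbr_of_sq_adj hCI ((hmem x).mp hx).2 ((hmem y).mp hy).2 hadj)
    exact ⟨c, hcC, fun x h1 h2 => hcA x ((hmem x).mpr ⟨h1, h2⟩)⟩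
  choose c hcC hcA using hSjex
  -- the sun adjacency pattern
  have hadjIff : ∀ i j, H.Adj (u i) (c j) ↔ (i = j ∨ i = j + 1) := by
    intro i j
    constructor
    · intro hadj
      by_contra hcon
      have hnotmem : u i ∉ (Q j : Set V) := fun hmem => hcon ((memIff i j).mp hmem)
      have hcl : (Gsq H).IsClique (insert (u i) (Q j : Set V)) := by
        apply (Q j).2.1.insert
        intro b hb hbne
        rcases mem_C_or_I hCI b with hbC | hbI
        · exact (universalC hCI hconn hV b hbC (u i) hbne).symm
        · exact ⟨hbne, Or.inr ⟨c j, hadj, (hcA j b hb hbI).symm⟩⟩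
      have heq := (Q j).2.2 _ hcl (Set.subset_insert _ _)
      exact hnotmem (heq ▸ Set.mem_insert _ _)
    · intro h
      exact hcA j (u i) ((memIff i j).mpr h) (huI i)
  exact sun_witness hCI hfree k hk hodd u c huI hcC huinj hadjIff

end Main
set_option maxHeartbeats 1000000 in
theorem square_of_oddSunFree_split_balanced {V : Type} [Fintype V] (H : SimpleGraph V)
    (hsplit : IsSplit H) (hfree : OddSunFree H) (hconn : H.Connected) :
    BalancedGraph (Gsq H) := by
  obtain ⟨C, I, hCI⟩ := hsplit
  intro k hk hodd hcopy
  obtain ⟨f, hf⟩ := hcopy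
  haveI : NeZero (2 * k) := ⟨by omega⟩
  have hn2 : 2 ≤ 2 * k := by omega
  have pos : 0 < 2 * k := by omega
  -- alternation of sides along the cycle
  have alt : ∀ m, ∀ (h : m < 2 * k),
      ((f ⟨m, h⟩).isLeft = true ↔ ((f ⟨0, pos⟩).isLeft = true ↔ m % 2 = 0)) := by
    intro m
    induction m with
    | zero => intro h; simp
    | succ n ih =>
      intro h
      have hn : n < 2 * k := by omega
      have edge : (cycleG (2 * k)).Adj ⟨n, hn⟩ ⟨n + 1, h⟩ := by
        rw [cycle_adj]
        refine ⟨?_, Or.inl ?_⟩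
        · intro he
          have := congrArg Fin.val he
          simp only [Fin.val_mk] at this
          omega
        · simp only [Fin.val_mk]
          rw [Nat.mod_eq_of_lt h]
      have hadj := (hf _ _).mp edge
      have hopp : ((f ⟨n + 1, h⟩).isLeft = true) ↔ ¬ ((f ⟨n, hn⟩).isLeft = true) := by
        cases h1 : f ⟨n, hn⟩ with
        | inl v =>
          cases h2 : f ⟨n + 1, h⟩ with
          | inl w =>
            rw [h1, h2] at hadj
            exact absurd hadj (inc_not_adj_ll _ _ _)
          | inr Q => simp
        | inr Q =>
          cases h2 : f ⟨n + 1, h⟩ with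
          | inl w => simp
          | inr R =>
            rw [h1, h2] at hadj
            exact absurd hadj (inc_not_adj_rr _ _ _)
      rw [hopp, ih hn]
      cases hb : (f ⟨0, pos⟩).isLeft <;> simp <;> omega
  cases hb : (f ⟨0, pos⟩).isLeft with
  | true =>
    have hL : ∀ (m : ℕ) (h : m < 2 * k), ((f ⟨m, h⟩).isLeft = true ↔ m % 2 = 0) := by
      intro m h
      rw [alt m h, hb]
      simp
    exact main_core hCI hfree hconn k hk hodd f hf hL
  | false =>
    set f' := ((Equiv.addRight (1 : Fin (2 * k))).toEmbedding).trans f with hf'def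
    have hfeq : ∀ a : Fin (2 * k), f' a = f (a + 1) := fun a => rfl
    have hf2 : ∀ a b, (cycleG (2 * k)).Adj a b ↔ (incidence (Gsq H)).Adj (f' a) (f' b) := by
      intro a b
      rw [hfeq, hfeq, ← hf, cycle_shift hn2]
    have hL : ∀ (m : ℕ) (h : m < 2 * k), ((f' ⟨m, h⟩).isLeft = true ↔ m % 2 = 0) := by
      intro m h
      rw [hfeq]
      have hval : ((⟨m, h⟩ : Fin (2 * k)) + 1).val = (m + 1) % (2 * k) := by
        rw [fin_add_one_val hn2]
      have he : ((⟨m, h⟩ : Fin (2 * k)) + 1) = ⟨(m + 1) % (2 * k), Nat.mod_lt _ pos⟩ :=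
        Fin.ext hval
      rw [he, alt _ _, hb]
      simp only [Fin.val_mk, Bool.false_eq_true, false_iff]
      rw [modsucc h]
      split_ifs <;> omega
    exact main_core hCI hfree hconn k hk hodd f' hf2 hL
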